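/- arXiv:2503.16226 — 3 statements merged into one kernel-verified Lean document; each statement's English description precedes it below -/
import Mathlib

section
/- Let X be a set with two topologies O₁ and O₂, and suppose there exists a subset E ⊆ X such that (a) E is closed for both O₁ and O₂, and (b) O₁ and O₂ induce the same subspace topologies on E and on X \ E. Then (X, O₁) is T0 if and only if (X, O₂) is T0. -/
/-! Inseparable points of `(X, O₁)` lie on the same side of the closed set `E`, and inseparability
of two points of a subspace depends only on the subspace topology. Hence `O₁` and `O₂` have the same
inseparability relation, and T0 means that this relation is equality. -/

open Topology

theorem inseparable_of_induced_eq {X Y : Type*} {t₁ t₂ : TopologicalSpace Y} {f : X → Y}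
    (h : t₁.induced f = t₂.induced f) {x y : X} (hxy : @Inseparable Y t₁ (f x) (f y)) :
    @Inseparable Y t₂ (f x) (f y) := by
  have hX : @Inseparable X (t₁.induced f) x y :=
    let := t₁; let := t₁.induced f; (IsInducing.induced f).inseparable_iff.mp hxy
  rw [h] at hX
  let := t₂; let := t₂.induced f
  exact (IsInducing.induced f).inseparable_iff.mpr hX

theorem inseparable_of_isClosed_of_induced_eq {X : Type*} {t₁ t₂ : TopologicalSpace X} {E : Set X}
    (hE : IsClosed[t₁] E)
    (hin : t₁.induced ((↑) : E → X) = t₂.induced ((↑) : E → X))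
    (hout : t₁.induced ((↑) : (Eᶜ : Set X) → X) = t₂.induced ((↑) : (Eᶜ : Set X) → X))
    {x y : X} (h : @Inseparable X t₁ x y) : @Inseparable X t₂ x y := by
  have hxy : x ∈ E ↔ y ∈ E := @Inseparable.mem_closed_iff X t₁ x y E h hE
  by_cases hx : x ∈ E
  · exact inseparable_of_induced_eq hin (x := ⟨x, hx⟩) (y := ⟨y, hxy.mp hx⟩) h
  · exact inseparable_of_induced_eq hout (x := ⟨x, hx⟩) (y := ⟨y, mt hxy.mpr hx⟩) h

/-- If two topologies on a set `X` have a common closed subset `E` and induce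
the same subspace topologies on `E` and on its complement, then one of them is
T0 iff the other is. -/
theorem stmt1 {X : Type*} (O₁ O₂ : TopologicalSpace X) (E : Set X)
    (hc₁ : @IsClosed X O₁ E) (hc₂ : @IsClosed X O₂ E)
    (hE : O₁.induced ((↑) : E → X) = O₂.induced ((↑) : E → X))
    (hEc : O₁.induced ((↑) : (Eᶜ : Set X) → X) = O₂.induced ((↑) : (Eᶜ : Set X) → X)) :
    @T0Space X O₁ ↔ @T0Space X O₂ := by
  rw [@t0Space_iff_inseparable X O₁, @t0Space_iff_inseparable X O₂]
  exact ⟨fun H x y h ↦ H x y (inseparable_of_isClosed_of_induced_eq hc₂ hE.symm hEc.symm h),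
    fun H x y h ↦ H x y (inseparable_of_isClosed_of_induced_eq hc₁ hE hEc h)⟩
end

section
/- Let X be an Alexandrov topological space (arbitrary intersections of open sets are open) whose specialization preorder is a partial order satisfying the ascending chain condition. Then X is sober: every irreducible closed subset of X is the closure of exactly one point. -/
/-- An Alexandrov space whose specialization preorder (x ≤ y iff x ∈ closure {y})
is a partial order satisfying the ascending chain condition is sober: every
irreducible closed subset is the closure of exactly one point. -/
theorem stmt2 {X : Type*} [TopologicalSpace X] [AlexandrovDiscrete X]
    (hanti : ∀ a b : X, a ∈ closure {b} → b ∈ closure {a} → a = b)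
    (hacc : ∀ f : ℕ → X, (∀ n, f n ∈ closure {f (n + 1)}) →
      ∃ n, ∀ m, n ≤ m → f m = f n) :
    ∀ S : Set X, IsIrreducible S → IsClosed S → ∃! x : X, closure {x} = S := by
  intro S hS hSc
  -- directedness from irreducibility
  have hdir : ∀ a ∈ S, ∀ b ∈ S, ∃ c ∈ S, a ∈ closure {c} ∧ b ∈ closure {c} := by
    intro a ha b hb
    have h := hS.2 (nhdsKer {a}) (nhdsKer {b}) isOpen_nhdsKer isOpen_nhdsKer
      ⟨a, ha, subset_nhdsKer rfl⟩ ⟨b, hb, subset_nhdsKer rfl⟩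
    obtain ⟨c, hcS, hca, hcb⟩ := h
    rw [mem_nhdsKer_iff_specializes] at hca hcb
    obtain ⟨y, hy, hspec⟩ := hca
    obtain ⟨z, hz, hspec'⟩ := hcb
    rw [Set.mem_singleton_iff] at hy hz
    subst hy; subst hz
    exact ⟨c, hcS, specializes_iff_mem_closure.1 hspec, specializes_iff_mem_closure.1 hspec'⟩
  -- existence of a maximal element via ACC
  have hmax : ∃ x ∈ S, ∀ y ∈ S, x ∈ closure {y} → y = x := by
    by_contra h
    push_neg at h
    obtain ⟨x0, hx0⟩ := hS.nonempty
    choose g hg1 hg2 hg3 using h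
    let F : ℕ → {x // x ∈ S} := fun n =>
      Nat.rec ⟨x0, hx0⟩ (fun _ p => ⟨g p.1 p.2, hg1 p.1 p.2⟩) n
    obtain ⟨n, hn⟩ := hacc (fun n => (F n).1) (fun n => hg2 (F n).1 (F n).2)
    exact hg3 (F n).1 (F n).2 (hn (n+1) (Nat.le_succ n))
  obtain ⟨x, hxS, hxmax⟩ := hmax
  refine ⟨x, ?_, ?_⟩
  · apply subset_antisymm
    · exact closure_minimal (Set.singleton_subset_iff.2 hxS) hSc
    · intro y hy
      obtain ⟨c, hcS, hxc, hyc⟩ := hdir x hxS y hy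
      rwa [hxmax c hcS hxc] at hyc
  · intro y hy
    have hyS : y ∈ S := hy ▸ subset_closure rfl
    have h1 : closure {x} = S := by
      apply subset_antisymm (closure_minimal (Set.singleton_subset_iff.2 hxS) hSc)
      intro z hz
      obtain ⟨c, hcS, hxc, hzc⟩ := hdir x hxS z hz
      rwa [hxmax c hcS hxc] at hzc
    have hx_in : x ∈ closure {y} := hy ▸ hxS
    have hy_in : y ∈ closure {x} := h1 ▸ hyS
    exact hanti y x hy_in hx_in
end

section
/- Let A be an additive category in which idempotents split, and let e₁, e₂, u be objects such that u is indecomposable with local endomorphism ring and u is a direct summand of e₁ ⊕ e₂. Then u is a direct summand of e₁ or a direct summand of e₂. -/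
/-!
Split `𝟙 u = s ≫ r` through `e₁ ⊞ e₂` as the sum of the two composites through `e₁` and `e₂`.
In the local ring `End u` one of two endomorphisms summing to `1` is a unit, and a composite
`u ⟶ eᵢ ⟶ u` that is an isomorphism exhibits `u` as a direct summand of `eᵢ`.
-/

open CategoryTheory CategoryTheory.Limits

namespace CategoryTheory

variable {C : Type*} [Category C]

theorem exists_comp_eq_id_of_isIso_comp {u x : C} (s : u ⟶ x) (r : x ⟶ u) [IsIso (s ≫ r)] :
    ∃ r' : x ⟶ u, s ≫ r' = 𝟙 u :=
  ⟨r ≫ inv (s ≫ r), by rw [← Category.assoc, IsIso.hom_inv_id]⟩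

theorem isIso_or_isIso_of_add_eq_id [Preadditive C] {u : C} [IsLocalRing (End u)]
    {f g : u ⟶ u} (h : f + g = 𝟙 u) : IsIso f ∨ IsIso g := by
  simpa only [isUnit_iff_isIso] using
    IsLocalRing.isUnit_or_isUnit_of_add_one (a := End.of f) (b := End.of g) h

theorem biprod.comp_fst_inl_add_comp_snd_inr [Preadditive C] [HasBinaryBiproducts C]
    {u e₁ e₂ : C} (s : u ⟶ e₁ ⊞ e₂) (r : e₁ ⊞ e₂ ⟶ u) :
    (s ≫ biprod.fst) ≫ (biprod.inl ≫ r) + (s ≫ biprod.snd) ≫ (biprod.inr ≫ r) = s ≫ r := by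
  conv_rhs => rw [← Category.id_comp r, ← biprod.total]
  simp only [Preadditive.add_comp, Preadditive.comp_add, Category.assoc]

end CategoryTheory

theorem stmt11_general {C : Type*} [Category C] [Preadditive C] [HasBinaryBiproducts C]
    (e₁ e₂ u : C)
    (hu_local : IsLocalRing (End u))
    (hsummand : ∃ (s : u ⟶ e₁ ⊞ e₂) (r : e₁ ⊞ e₂ ⟶ u), s ≫ r = 𝟙 u) :
    (∃ (s : u ⟶ e₁) (r : e₁ ⟶ u), s ≫ r = 𝟙 u) ∨
    (∃ (s : u ⟶ e₂) (r : e₂ ⟶ u), s ≫ r = 𝟙 u) := by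
  obtain ⟨s, r, hsr⟩ := hsummand
  rcases isIso_or_isIso_of_add_eq_id ((biprod.comp_fst_inl_add_comp_snd_inr s r).trans hsr)
    with h | h
  · exact .inl ⟨_, exists_comp_eq_id_of_isIso_comp (s ≫ biprod.fst) (biprod.inl ≫ r)⟩
  · exact .inr ⟨_, exists_comp_eq_id_of_isIso_comp (s ≫ biprod.snd) (biprod.inr ≫ r)⟩

/-- In an idempotent complete additive category, an indecomposable object with
local endomorphism ring which is a direct summand of a biproduct `e₁ ⊞ e₂` is a
direct summand of `e₁` or of `e₂`. -/
theorem stmt11 {C : Type*} [Category C] [Preadditive C] [HasBinaryBiproducts C]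
    [IsIdempotentComplete C] (e₁ e₂ u : C)
    (hu_ne : ¬ IsZero u)
    (hu_ind : ∀ (a b : C), (u ≅ a ⊞ b) → IsZero a ∨ IsZero b)
    (hu_local : IsLocalRing (End u))
    (hsummand : ∃ (s : u ⟶ e₁ ⊞ e₂) (r : e₁ ⊞ e₂ ⟶ u), s ≫ r = 𝟙 u) :
    (∃ (s : u ⟶ e₁) (r : e₁ ⟶ u), s ≫ r = 𝟙 u) ∨
    (∃ (s : u ⟶ e₂) (r : e₂ ⟶ u), s ≫ r = 𝟙 u) :=
  stmt11_general e₁ e₂ u hu_local hsummand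
end
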